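/- Let a : ℝⁿ → ℝⁿ be measurable with (1+|x|)^{n+1+m} |a(x)| bounded, satisfying additionally lim_{|x|→∞} (1+|x|)^{n+1+m} |a(x)| = 0. Then for each T > 0, the heat evolution u(x,t) = (g_t * a)(x) satisfies lim_{|x|→∞} sup_{t∈[0,T]} (1+|x|)^{n+1+m} |u(x,t)| = 0. -/

import Mathlib

open MeasureTheory Real Filter

/-- The Gaussian heat kernel on ℝⁿ. -/
noncomputable def heatKernel (n : ℕ) (t : ℝ) (x : EuclideanSpace ℝ (Fin n)) : ℝ :=
  (4 * Real.pi * t) ^ (-(n : ℝ) / 2) * Real.exp (-‖x‖ ^ 2 / (4 * t))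

/-! Split the convolution at `‖y‖ = ‖x‖ / 2`. On the ball, `‖x - y‖ ≥ ‖x‖ / 2`, and trading the
Gaussian for a power via `e^{-s} ≤ (p / s) ^ p` gives `g_t(z) ≤ c t^{(q-n)/2} ‖z‖^{-q}`; with
`q = N + 1` this part is `O(‖a‖₁ ‖x‖^{-N-1})` uniformly in `t ≤ T`, one order better than the
weight `(1 + ‖x‖)^N`. Off the ball, `(1 + ‖x‖)^N ‖a y‖ ≤ 2^N (1 + ‖y‖)^N ‖a y‖` is small by the
decay hypothesis, and `g_t` has mass one. -/

open Bornology

theorem exp_neg_le_div_rpow {p s : ℝ} (hp : 0 ≤ p) (hs : 0 < s) : exp (-s) ≤ (p / s) ^ p := by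
  rcases hp.eq_or_lt with rfl | hp
  · simpa using hs.le
  have h : (s / p) ^ p ≤ exp s := by
    calc (s / p) ^ p ≤ exp (s / p) ^ p := by
          gcongr
          linarith [add_one_le_exp (s / p)]
      _ = exp s := by rw [← exp_mul, div_mul_cancel₀ s hp.ne']
  rw [exp_neg, ← inv_div, inv_rpow (div_pos hs hp).le]
  exact inv_anti₀ (by positivity) h

theorem integrable_of_one_add_norm_pow_mul_le {E F : Type*} [NormedAddCommGroup E]
    [NormedSpace ℝ E] [FiniteDimensional ℝ E] [MeasurableSpace E] [BorelSpace E]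
    {μ : Measure E} [μ.IsAddHaarMeasure] [NormedAddCommGroup F] {f : E → F} {N : ℕ} {C : ℝ}
    (hN : Module.finrank ℝ E < N) (hf : AEStronglyMeasurable f μ)
    (hC : ∀ x, (1 + ‖x‖) ^ N * ‖f x‖ ≤ C) : Integrable f μ := by
  refine ((integrable_one_add_norm (μ := μ) (r := N) (by exact_mod_cast hN)).const_mul C).mono'
    hf (ae_of_all _ fun x => ?_)
  rw [rpow_neg (by positivity), rpow_natCast, ← div_eq_mul_inv, le_div_iff₀ (by positivity),
    mul_comm]
  exact hC x

theorem norm_integral_smul_le_mul_integral_norm_add {α F : Type*} [MeasurableSpace α]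
    {μ : Measure α} [NormedAddCommGroup F] [NormedSpace ℝ F] {K : α → ℝ} {f : α → F}
    {s : Set α} {κ δ : ℝ}
    (hK : ∀ y, 0 ≤ K y) (hK_int : Integrable K μ) (hK_one : ∫ y, K y ∂μ ≤ 1)
    (hf : Integrable f μ) (hs : MeasurableSet s) (hκ : 0 ≤ κ) (hδ : 0 ≤ δ)
    (hK_near : ∀ y ∈ s, K y ≤ κ) (hf_far : ∀ y ∉ s, ‖f y‖ ≤ δ) :
    ‖∫ y, K y • f y ∂μ‖ ≤ κ * ∫ y, ‖f y‖ ∂μ + δ := by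
  have h_near : ∀ y ∈ s, ‖K y • f y‖ ≤ κ * ‖f y‖ := fun y hy => by
    rw [norm_smul, norm_of_nonneg (hK y)]
    exact mul_le_mul_of_nonneg_right (hK_near y hy) (norm_nonneg _)
  have h_far : ∀ y ∈ sᶜ, ‖K y • f y‖ ≤ δ * K y := fun y hy => by
    rw [norm_smul, norm_of_nonneg (hK y), mul_comm]
    exact mul_le_mul_of_nonneg_right (hf_far y hy) (hK y)
  have hKf : AEStronglyMeasurable (fun y => K y • f y) μ := hK_int.1.smul hf.1
  have hint_near : IntegrableOn (fun y => K y • f y) s μ :=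
    (hf.norm.const_mul κ).integrableOn.mono' hKf.restrict (ae_restrict_of_forall_mem hs h_near)
  have hint_far : IntegrableOn (fun y => K y • f y) sᶜ μ :=
    (hK_int.const_mul δ).integrableOn.mono' hKf.restrict
      (ae_restrict_of_forall_mem hs.compl h_far)
  calc ‖∫ y, K y • f y ∂μ‖
      = ‖(∫ y in s, K y • f y ∂μ) + ∫ y in sᶜ, K y • f y ∂μ‖ := by
        rw [integral_add_compl hs (integrableOn_univ.1 (by simpa using hint_near.union hint_far))]
    _ ≤ (∫ y in s, κ * ‖f y‖ ∂μ) + ∫ y in sᶜ, δ * K y ∂μ :=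
        (norm_add_le _ _).trans (add_le_add
          (norm_integral_le_of_norm_le (hf.norm.const_mul κ).integrableOn
            (ae_restrict_of_forall_mem hs h_near))
          (norm_integral_le_of_norm_le (hK_int.const_mul δ).integrableOn
            (ae_restrict_of_forall_mem hs.compl h_far)))
    _ ≤ κ * ∫ y, ‖f y‖ ∂μ + δ * 1 := by
        rw [integral_const_mul, integral_const_mul]
        gcongr κ * ?_ + δ * ?_
        · exact setIntegral_le_integral hf.norm (ae_of_all _ fun y => norm_nonneg _)
        · exact (setIntegral_le_integral hK_int (ae_of_all _ hK)).trans hK_one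
    _ = κ * ∫ y, ‖f y‖ ∂μ + δ := by rw [mul_one]

theorem eventually_cobounded_forall_half_norm_lt {E : Type*} [SeminormedAddCommGroup E]
    {p : E → Prop} (h : ∀ᶠ y in cobounded E, p y) :
    ∀ᶠ x in cobounded E, ∀ y, ‖x‖ / 2 < ‖y‖ → p y := by
  obtain ⟨R, -, hR⟩ := Filter.hasBasis_cobounded_norm.eventually_iff.1 h
  filter_upwards [eventually_cobounded_le_norm (2 * R)] with x hx y hy
  exact hR (by linarith : R ≤ ‖y‖)

theorem tendsto_one_add_pow_div_pow_succ (N : ℕ) :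
    Tendsto (fun r : ℝ => (1 + r) ^ N / r ^ (N + 1)) atTop (nhds 0) := by
  have h : Tendsto (fun r : ℝ => (1 + r⁻¹) ^ N * r⁻¹) atTop (nhds ((1 + 0) ^ N * 0)) :=
    ((tendsto_inv_atTop_zero.const_add 1).pow N).mul tendsto_inv_atTop_zero
  rw [mul_zero] at h
  refine h.congr' ((eventually_gt_atTop 0).mono fun r hr => ?_)
  rw [show 1 + r⁻¹ = (1 + r) / r by field_simp; ring, div_pow, ← div_eq_mul_inv, div_div,
    ← pow_succ]

section HeatKernel

variable {n : ℕ} {t : ℝ}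

theorem heatKernel_nonneg (ht : 0 ≤ t) (z : EuclideanSpace ℝ (Fin n)) : 0 ≤ heatKernel n t z := by
  unfold heatKernel
  positivity

theorem integral_heatKernel (ht : 0 < t) : ∫ z, heatKernel n t z = 1 := by
  have hb : (0 : ℝ) < (4 * t)⁻¹ := by positivity
  have h : heatKernel n t = fun z => (4 * π * t) ^ (-(n : ℝ) / 2) * exp (-(4 * t)⁻¹ * ‖z‖ ^ 2) :=
    funext fun z => by unfold heatKernel; ring_nf
  rw [h, integral_const_mul, GaussianFourier.integral_rexp_neg_mul_sq_norm hb,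
    finrank_euclideanSpace_fin, div_inv_eq_mul, show π * (4 * t) = 4 * π * t by ring,
    ← rpow_add (by positivity), neg_div, neg_add_cancel, rpow_zero]

theorem integrable_heatKernel (ht : 0 < t) : Integrable (heatKernel n t) :=
  Integrable.of_integral_ne_zero (by rw [integral_heatKernel ht]; exact one_ne_zero)

theorem heatKernel_le_div_rpow {q : ℝ} (hq : 0 ≤ q) (ht : 0 < t)
    {z : EuclideanSpace ℝ (Fin n)} (hz : z ≠ 0) :
    heatKernel n t z ≤
      (4 * π) ^ (-(n : ℝ) / 2) * (2 * q) ^ (q / 2) * t ^ ((q - n) / 2) / ‖z‖ ^ q := by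
  have hz' : 0 < ‖z‖ := norm_pos_iff.2 hz
  have hexp : exp (-‖z‖ ^ 2 / (4 * t)) ≤ (2 * q * t) ^ (q / 2) / ‖z‖ ^ q := by
    rw [neg_div]
    refine (exp_neg_le_div_rpow (p := q / 2) (by positivity) (by positivity)).trans_eq ?_
    rw [show q / 2 / (‖z‖ ^ 2 / (4 * t)) = 2 * q * t / ‖z‖ ^ 2 by field_simp; ring,
      div_rpow (by positivity) (by positivity), ← rpow_natCast, ← rpow_mul hz'.le,
      Nat.cast_ofNat, mul_div_cancel₀ q two_ne_zero]
  calc heatKernel n t z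
      ≤ (4 * π * t) ^ (-(n : ℝ) / 2) * ((2 * q * t) ^ (q / 2) / ‖z‖ ^ q) := by
        unfold heatKernel; gcongr
    _ = (4 * π) ^ (-(n : ℝ) / 2) * (2 * q) ^ (q / 2) * (t ^ (-(n : ℝ) / 2) * t ^ (q / 2))
          / ‖z‖ ^ q := by
        rw [mul_rpow (by positivity) ht.le, mul_rpow (by positivity) ht.le]
        ring
    _ = _ := by rw [← rpow_add ht]; ring_nf

variable {F : Type*} [NormedAddCommGroup F] [NormedSpace ℝ F]

theorem norm_integral_heatKernel_smul_le {q δ : ℝ} (hq : 0 ≤ q) (ht : 0 < t)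
    {a : EuclideanSpace ℝ (Fin n) → F} (ha : Integrable a) {x : EuclideanSpace ℝ (Fin n)}
    (hx : x ≠ 0) (hδ : 0 ≤ δ) (ha_far : ∀ y, ‖x‖ / 2 < ‖y‖ → ‖a y‖ ≤ δ) :
    ‖∫ y, heatKernel n t (x - y) • a y‖ ≤
      (4 * π) ^ (-(n : ℝ) / 2) * (2 * q) ^ (q / 2) * t ^ ((q - n) / 2) / (‖x‖ / 2) ^ q
        * (∫ y, ‖a y‖) + δ := by
  have hx' : 0 < ‖x‖ / 2 := by have := norm_pos_iff.2 hx; positivity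
  refine norm_integral_smul_le_mul_integral_norm_add (s := Metric.closedBall 0 (‖x‖ / 2))
    (κ := (4 * π) ^ (-(n : ℝ) / 2) * (2 * q) ^ (q / 2) * t ^ ((q - n) / 2) / (‖x‖ / 2) ^ q)
    (fun y => heatKernel_nonneg ht.le _) ((integrable_heatKernel ht).comp_sub_left x)
    (by rw [integral_sub_left_eq_self, integral_heatKernel ht]) ha
    Metric.isClosed_closedBall.measurableSet
    (by positivity) hδ (fun y hy => ?_) (fun y hy => ha_far y ?_)
  · have hxy : ‖x‖ / 2 ≤ ‖x - y‖ := by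
      rw [mem_closedBall_zero_iff] at hy
      linarith [norm_sub_norm_le x y]
    refine (heatKernel_le_div_rpow hq ht (norm_pos_iff.1 (hx'.trans_le hxy))).trans ?_
    gcongr
  · simpa using hy

theorem exists_one_add_norm_pow_mul_norm_integral_heatKernel_smul_le {N : ℕ} (hN : n ≤ N + 1)
    (T : ℝ) {a : EuclideanSpace ℝ (Fin n) → F} (ha : Integrable a) :
    ∃ K, ∀ t ∈ Set.Ioc (0 : ℝ) T, ∀ x ≠ 0, ∀ δ, 0 ≤ δ →
      (∀ y, ‖x‖ / 2 < ‖y‖ → (1 + ‖y‖) ^ N * ‖a y‖ ≤ δ) →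
      (1 + ‖x‖) ^ N * ‖∫ y, heatKernel n t (x - y) • a y‖ ≤
        K * ((1 + ‖x‖) ^ N / ‖x‖ ^ (N + 1)) + 2 ^ N * δ := by
  set q : ℝ := ((N + 1 : ℕ) : ℝ) with hq
  set c := (4 * π) ^ (-(n : ℝ) / 2) * (2 * q) ^ (q / 2)
  set A := ∫ y, ‖a y‖
  have he : 0 ≤ (q - n) / 2 := div_nonneg (sub_nonneg.2 (Nat.cast_le.2 hN)) zero_le_two
  refine ⟨c * T ^ ((q - n) / 2) * 2 ^ q * A, ?_⟩
  rintro t ⟨ht, htT⟩ x hx δ hδ ha_far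
  have hr : 0 < ‖x‖ := norm_pos_iff.2 hx
  have hT : 0 < T := ht.trans_le htT
  have ha_far' : ∀ y, ‖x‖ / 2 < ‖y‖ → ‖a y‖ ≤ δ / (1 + ‖x‖ / 2) ^ N := fun y hy => by
    rw [le_div_iff₀ (by positivity), mul_comm]
    calc (1 + ‖x‖ / 2) ^ N * ‖a y‖ ≤ (1 + ‖y‖) ^ N * ‖a y‖ := by gcongr
      _ ≤ δ := ha_far y hy
  have hnear : c * t ^ ((q - n) / 2) / (‖x‖ / 2) ^ q ≤
      c * T ^ ((q - n) / 2) * 2 ^ q / ‖x‖ ^ (N + 1) := by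
    rw [div_rpow hr.le zero_le_two, div_div_eq_mul_div, hq, rpow_natCast, rpow_natCast]
    gcongr
  have hfar : (1 + ‖x‖) ^ N * (δ / (1 + ‖x‖ / 2) ^ N) ≤ 2 ^ N * δ := by
    rw [mul_div_assoc', div_le_iff₀ (by positivity), mul_right_comm, ← mul_pow]
    gcongr
    linarith
  calc (1 + ‖x‖) ^ N * ‖∫ y, heatKernel n t (x - y) • a y‖
      ≤ (1 + ‖x‖) ^ N * (c * t ^ ((q - n) / 2) / (‖x‖ / 2) ^ q * A + δ / (1 + ‖x‖ / 2) ^ N) := by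
        gcongr
        exact norm_integral_heatKernel_smul_le (by positivity) ht ha hx (by positivity) ha_far'
    _ ≤ (1 + ‖x‖) ^ N * (c * T ^ ((q - n) / 2) * 2 ^ q / ‖x‖ ^ (N + 1) * A) + 2 ^ N * δ := by
        rw [mul_add]
        gcongr
    _ = _ := by ring

theorem tendsto_iSup_one_add_norm_pow_mul_norm_integral_heatKernel_smul {N : ℕ}
    (hN : n ≤ N + 1) (T : ℝ) {a : EuclideanSpace ℝ (Fin n) → F} (ha : Integrable a)
    (hdecay : Tendsto (fun x => (1 + ‖x‖) ^ N * ‖a x‖) (cocompact _) (nhds 0)) :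
    Tendsto (fun x => ⨆ t ∈ Set.Ioc (0 : ℝ) T,
        (1 + ‖x‖) ^ N * ‖∫ y, heatKernel n t (x - y) • a y‖) (cocompact _) (nhds 0) := by
  obtain ⟨K, hK⟩ := exists_one_add_norm_pow_mul_norm_integral_heatKernel_smul_le hN T ha
  rw [← Metric.cobounded_eq_cocompact] at hdecay ⊢
  refine tendsto_order.2 ⟨fun b hb => Eventually.of_forall fun x => hb.trans_le
    (Real.iSup_nonneg fun t => Real.iSup_nonneg fun _ => by positivity), fun ε hε => ?_⟩
  have hδ : 0 < ε / 2 ^ (N + 2) := by positivity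
  have hnear : ∀ᶠ x in cobounded (EuclideanSpace ℝ (Fin n)),
      K * ((1 + ‖x‖) ^ N / ‖x‖ ^ (N + 1)) < ε / 2 := by
    refine (((tendsto_one_add_pow_div_pow_succ N).comp tendsto_norm_cobounded_atTop).const_mul
      K).eventually (gt_mem_nhds ?_)
    simpa using half_pos hε
  have hfar := eventually_cobounded_forall_half_norm_lt (hdecay.eventually (ge_mem_nhds hδ))
  filter_upwards [hnear, hfar, eventually_ne_cobounded 0] with x hx_near hx_far hx
  have hfar_term : 2 ^ N * (ε / 2 ^ (N + 2)) = ε / 4 := by field_simp; ring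
  have hbound : ∀ t ∈ Set.Ioc (0 : ℝ) T,
      (1 + ‖x‖) ^ N * ‖∫ y, heatKernel n t (x - y) • a y‖ ≤ 3 * ε / 4 := fun t ht => by
    linarith [hK t ht x hx _ hδ.le hx_far]
  exact (Real.iSup_le (fun t => Real.iSup_le (hbound t) (by positivity)) (by positivity)).trans_lt
    (by linarith)

end HeatKernel

theorem heat_semigroup_decay_preserved_general (n m : ℕ) (T : ℝ)
    (a : EuclideanSpace ℝ (Fin n) → EuclideanSpace ℝ (Fin n)) (hmeas : Measurable a)
    (C : ℝ) (hbd : ∀ x, (1 + ‖x‖) ^ (n + 1 + m) * ‖a x‖ ≤ C)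
    (hdecay : Tendsto (fun x : EuclideanSpace ℝ (Fin n) =>
        (1 + ‖x‖) ^ (n + 1 + m) * ‖a x‖)
      (cocompact (EuclideanSpace ℝ (Fin n))) (nhds 0)) :
    Tendsto (fun x : EuclideanSpace ℝ (Fin n) =>
        ⨆ t ∈ Set.Ioc (0 : ℝ) T,
          (1 + ‖x‖) ^ (n + 1 + m) * ‖∫ y, heatKernel n t (x - y) • a y‖)
      (cocompact (EuclideanSpace ℝ (Fin n))) (nhds 0) := by
  have ha : Integrable a :=
    integrable_of_one_add_norm_pow_mul_le (by rw [finrank_euclideanSpace_fin]; omega)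
      hmeas.aestronglyMeasurable hbd
  exact tendsto_iSup_one_add_norm_pow_mul_norm_integral_heatKernel_smul (by omega) T ha hdecay

/-- If (1+|x|)^{n+1+m}|a(x)| is bounded and tends to 0 as |x| → ∞, then for
each T > 0 the heat evolution u(x,t) = (g_t * a)(x) satisfies
lim_{|x|→∞} sup_{t∈(0,T]} (1+|x|)^{n+1+m}|u(x,t)| = 0. -/
theorem heat_semigroup_decay_preserved (n m : ℕ) (hn : 1 ≤ n) (T : ℝ) (hT : 0 < T)
    (a : EuclideanSpace ℝ (Fin n) → EuclideanSpace ℝ (Fin n)) (hmeas : Measurable a)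
    (C : ℝ) (hbd : ∀ x, (1 + ‖x‖) ^ (n + 1 + m) * ‖a x‖ ≤ C)
    (hdecay : Tendsto (fun x : EuclideanSpace ℝ (Fin n) =>
        (1 + ‖x‖) ^ (n + 1 + m) * ‖a x‖)
      (cocompact (EuclideanSpace ℝ (Fin n))) (nhds 0)) :
    Tendsto (fun x : EuclideanSpace ℝ (Fin n) =>
        ⨆ t ∈ Set.Ioc (0 : ℝ) T,
          (1 + ‖x‖) ^ (n + 1 + m) * ‖∫ y, heatKernel n t (x - y) • a y‖)
      (cocompact (EuclideanSpace ℝ (Fin n))) (nhds 0) :=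
  heat_semigroup_decay_preserved_general n m T a hmeas C hbd hdecay
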